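/- For every natural number n ≥ 9, the Bob-start game chromatic number of the 4×n grid graph is exactly 4: χ_g^B(P_4 □ P_n) = 4. -/

import Mathlib

open SimpleGraph

/-- A move coloring vertex `v` with color `col` is valid for the partial coloring `c`
if `v` is uncolored and no neighbor of `v` already has color `col`. -/
def validMove {V : Type*} (G : SimpleGraph V) {k : ℕ} (c : V → Option (Fin k))
    (v : V) (col : Fin k) : Prop :=
  c v = none ∧ ∀ u, G.Adj u v → c u ≠ some col

/-- All vertices are colored. -/
def allColored {V : Type*} {k : ℕ} (c : V → Option (Fin k)) : Prop :=
  ∀ v, c v ≠ none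

/-- `AliceWins G k turn c` : starting from the partial proper coloring `c` of `G`,
with `turn = true` meaning that it is Alice's move (`turn = false` : Bob's move),
Alice can force the `k`-coloring game to end with every vertex colored. -/
inductive AliceWins {V : Type*} [DecidableEq V] (G : SimpleGraph V) (k : ℕ) :
    Bool → (V → Option (Fin k)) → Prop
  | finished (turn : Bool) (c : V → Option (Fin k)) (h : allColored c) :
      AliceWins G k turn c
  | aliceMove (c : V → Option (Fin k)) (v : V) (col : Fin k)
      (hm : validMove G c v col)
      (h : AliceWins G k false (Function.update c v (some col))) :
      AliceWins G k true c
  | bobTurn (c : V → Option (Fin k))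
      (hne : ∃ v col, validMove G c v col)
      (h : ∀ v col, validMove G c v col →
        AliceWins G k true (Function.update c v (some col))) :
      AliceWins G k false c

/-- `BobWins G k turn c` : starting from the partial proper coloring `c` of `G`,
with `turn = true` meaning that it is Alice's move (`turn = false` : Bob's move),
Bob can force the `k`-coloring game to end with some vertex left uncolored. -/
inductive BobWins {V : Type*} [DecidableEq V] (G : SimpleGraph V) (k : ℕ) :
    Bool → (V → Option (Fin k)) → Prop
  | aliceTurn (c : V → Option (Fin k)) (h0 : ¬ allColored c)
      (h : ∀ v col, validMove G c v col →
        BobWins G k false (Function.update c v (some col))) :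
      BobWins G k true c
  | bobMove (c : V → Option (Fin k)) (v : V) (col : Fin k)
      (hm : validMove G c v col)
      (h : BobWins G k true (Function.update c v (some col))) :
      BobWins G k false c
  | bobStuck (c : V → Option (Fin k)) (h0 : ¬ allColored c)
      (h : ∀ v col, ¬ validMove G c v col) :
      BobWins G k false c

/-- The game chromatic number: the least `k` such that Alice has a winning strategy
in the `k`-coloring game on `G` (Alice moves first), starting from the empty coloring. -/
noncomputable def gameChromaticNumber {V : Type*} [DecidableEq V] (G : SimpleGraph V) : ℕ :=
  sInf {k | AliceWins G k true (fun _ => none)}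

/-- The Bob-start game chromatic number: the least `k` such that Alice has a winning
strategy in the `k`-coloring game on `G` in which Bob moves first. -/
noncomputable def bobStartGameChromaticNumber {V : Type*} [DecidableEq V]
    (G : SimpleGraph V) : ℕ :=
  sInf {k | AliceWins G k false (fun _ => none)}

/-!
With four colors Alice answers every move `(v, a)` of Bob by `(σ v, a.rev)`, where `σ` reflects
the grid in its horizontal midline. The position stays symmetric, so her reply is legal, and an
uncolored vertex always has a free color: its mirror image is uncolored too, and it has at most
three other neighbors.

With `k ≤ 3` colors Bob wins inside the window formed by the first nine columns. He only plays on
the first eight, where the window contains every neighbor of his vertex, so a move of Alice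
outside the window acts as a pass, and an uncolored window vertex that sees all `k` colors in the
window can never be colored in the grid. That Bob wins this finite game within three moves is
checked by evaluating his strategy in the kernel.
-/

open Function Finset

section Game

variable {V : Type*} {G : SimpleGraph V} {k : ℕ}

def IsDead (G : SimpleGraph V) (c : V → Option (Fin k)) (u : V) : Prop :=
  c u = none ∧ ∀ a, ∃ w, G.Adj w u ∧ c w = some a

theorem IsDead.comap {W : Type*} {H : SimpleGraph W} (e : H →g G) {c : V → Option (Fin k)}
    {u : W} (h : IsDead H (c ∘ e) u) : IsDead G c (e u) :=
  ⟨h.1, fun a => let ⟨w, hw, hwa⟩ := h.2 a; ⟨e w, e.map_adj hw, hwa⟩⟩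

theorem exists_validMove_of_card_lt {c : V → Option (Fin k)} {v : V} (hv : c v = none)
    {T : Finset V} (hT : ∀ u, G.Adj u v → c u ≠ none → u ∈ T) (hTk : #T < k) :
    ∃ a, validMove G c v a := by
  by_contra! h
  have hsub : (univ : Finset (Fin k)).image some ⊆ T.image c := by
    intro x hx
    obtain ⟨a, -, rfl⟩ := mem_image.1 hx
    obtain ⟨u, hu, hua⟩ : ∃ u, G.Adj u v ∧ c u = some a := by
      simpa [validMove, hv] using h a
    exact mem_image.2 ⟨u, hT u hu (by simp [hua]), hua⟩
  have := (card_le_card hsub).trans card_image_le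
  rw [card_image_of_injective _ (Option.some_injective _), card_univ, Fintype.card_fin] at this
  omega

variable [DecidableEq V]

theorem BobWins.not_aliceWins {t : Bool} {c : V → Option (Fin k)}
    (hb : BobWins G k t c) (ha : AliceWins G k t c) : False := by
  induction hb with
  | aliceTurn c h0 _ ih =>
    cases ha with
    | finished _ _ hall => exact h0 hall
    | aliceMove _ v a hm ha => exact ih v a hm ha
  | bobMove c v a hm _ ih =>
    cases ha with
    | finished _ _ hall => exact hall v hm.1
    | bobTurn _ _ h => exact ih (h v a hm)
  | bobStuck c h0 h =>
    cases ha with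
    | finished _ _ hall => exact h0 hall
    | bobTurn _ hne _ => obtain ⟨v, a, hv⟩ := hne; exact h v a hv

theorem bobStartGameChromaticNumber_eq_of_aliceWins_of_bobWins
    (hA : AliceWins G k false fun _ => none) (hB : ∀ j < k, BobWins G j false fun _ => none) :
    bobStartGameChromaticNumber G = k :=
  le_antisymm (Nat.sInf_le hA) <| le_csInf ⟨k, hA⟩ fun j hj =>
    not_lt.1 fun hjk => (hB j hjk).not_aliceWins hj

theorem IsDead.update {c : V → Option (Fin k)} {u v : V} {a : Fin k} (h : IsDead G c u)
    (hm : validMove G c v a) : IsDead G (update c v (some a)) u := by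
  have hvu : v ≠ u := by
    rintro rfl
    obtain ⟨w, hw, hwa⟩ := h.2 a
    exact hm.2 w hw hwa
  refine ⟨by rw [update_of_ne hvu.symm]; exact h.1, fun b => ?_⟩
  obtain ⟨w, hw, hwb⟩ := h.2 b
  have hwv : w ≠ v := by rintro rfl; simp [hm.1] at hwb
  exact ⟨w, hw, by rw [update_of_ne hwv]; exact hwb⟩

variable [Fintype V]

def uncolored (c : V → Option (Fin k)) : Finset V := univ.filter (c · = none)

theorem card_uncolored_update_lt {c : V → Option (Fin k)} {v : V} (hv : c v = none) (a : Fin k) :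
    #(uncolored (update c v (some a))) < #(uncolored c) := by
  refine card_lt_card ⟨fun x hx => ?_, fun h => ?_⟩
  · have hxv : x ≠ v := by rintro rfl; simp [uncolored] at hx
    simpa [uncolored, update_of_ne hxv] using hx
  · simpa [uncolored] using h (show v ∈ uncolored c by simpa [uncolored] using hv)

theorem IsDead.bobWins {c : V → Option (Fin k)} {u : V} (h : IsDead G c u) :
    ∀ t, BobWins G k t c
  | true => .aliceTurn c (fun hc => hc u h.1) fun v a hm =>
      (h.update hm).bobWins false
  | false => by
      by_cases hex : ∃ v a, validMove G c v a
      · obtain ⟨v, a, hm⟩ := hex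
        exact .bobMove c v a hm ((h.update hm).bobWins true)
      · push Not at hex
        exact .bobStuck c (fun hc => hc u h.1) hex
termination_by #(uncolored c)
decreasing_by all_goals exact card_uncolored_update_lt hm.1 a

end Game

section Mirror

variable {V : Type*} [DecidableEq V] {G : SimpleGraph V} {k : ℕ} {σ : V → V} {τ : Fin k → Fin k}

theorem validMove_mirror (hσ : Involutive σ) (hσG : ∀ u v, G.Adj (σ u) (σ v) ↔ G.Adj u v)
    (hσ_ne : ∀ v, σ v ≠ v) (hτ : Involutive τ) (hτ_ne : ∀ a, τ a ≠ a)
    {c : V → Option (Fin k)} (hc : ∀ v, c (σ v) = (c v).map τ) {v : V} {a : Fin k}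
    (hm : validMove G c v a) : validMove G (update c v (some a)) (σ v) (τ a) := by
  refine ⟨by rw [update_of_ne (hσ_ne v), hc, hm.1, Option.map_none], fun u hu hua => ?_⟩
  rcases eq_or_ne u v with rfl | huv
  · rw [update_self, Option.some_inj] at hua
    exact hτ_ne a hua.symm
  · have hadj : G.Adj (σ u) v := by rwa [← hσG, hσ u]
    rw [update_of_ne huv, ← hσ u, hc, Option.map_eq_some_iff] at hua
    obtain ⟨b, hb, hba⟩ := hua
    exact hm.2 (σ u) hadj (by rw [hb, hτ.injective hba])

theorem mirror_update (hσ : Involutive σ) (hσ_ne : ∀ v, σ v ≠ v) (hτ : Involutive τ)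
    {c : V → Option (Fin k)} (hc : ∀ v, c (σ v) = (c v).map τ) (v : V) (a : Fin k) (x : V) :
    update (update c v (some a)) (σ v) (some (τ a)) (σ x) =
      (update (update c v (some a)) (σ v) (some (τ a)) x).map τ := by
  rcases eq_or_ne x v with rfl | hxv
  · simp [update_of_ne (hσ_ne x).symm]
  rcases eq_or_ne x (σ v) with rfl | hxσ
  · simp [hσ v, update_of_ne (hσ_ne v).symm, hτ a]
  have h1 : σ x ≠ σ v := hσ.injective.ne hxv
  have h2 : σ x ≠ v := fun h => hxσ (by rw [← h, hσ x])
  simp [update_of_ne, h1, h2, hxv, hxσ, hc]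

theorem aliceWins_of_mirror [Fintype V] [G.LocallyFinite] (hσ : Involutive σ)
    (hσG : ∀ u v, G.Adj (σ u) (σ v) ↔ G.Adj u v)
    (hσ_ne : ∀ v, σ v ≠ v) (hτ : Involutive τ) (hτ_ne : ∀ a, τ a ≠ a)
    (hdeg : ∀ v, #((G.neighborFinset v).erase (σ v)) < k)
    (c : V → Option (Fin k)) (hc : ∀ v, c (σ v) = (c v).map τ) : AliceWins G k false c := by
  by_cases hall : allColored c
  · exact .finished _ _ hall
  obtain ⟨v₀, hv₀⟩ : ∃ v, c v = none := by simpa [allColored] using hall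
  have hfree : ∃ a, validMove G c v₀ a := by
    refine exists_validMove_of_card_lt hv₀ (fun u hu hcu => ?_) (hdeg v₀)
    refine mem_erase.2 ⟨?_, (mem_neighborFinset _ _ _).2 hu.symm⟩
    rintro rfl
    simp [hc, hv₀] at hcu
  refine .bobTurn c ⟨v₀, hfree⟩ fun v a hm => ?_
  have hreply := validMove_mirror hσ hσG hσ_ne hτ hτ_ne hc hm
  exact .aliceMove _ _ _ hreply <| aliceWins_of_mirror hσ hσG hσ_ne hτ hτ_ne hdeg _
    (mirror_update hσ hσ_ne hτ hc v a)
termination_by #(uncolored c)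
decreasing_by
  exact (card_uncolored_update_lt hreply.1 _).trans (card_uncolored_update_lt hm.1 a)

end Mirror

instance (m : ℕ) : DecidableRel (pathGraph m).Adj := fun _ _ => decidable_of_iff' _ pathGraph_adj

instance {α β : Type*} [DecidableEq α] [DecidableEq β] {G : SimpleGraph α} {H : SimpleGraph β}
    [DecidableRel G.Adj] [DecidableRel H.Adj] : DecidableRel (G □ H).Adj :=
  fun _ _ => decidable_of_iff' _ boxProd_adj

theorem card_neighborFinset_pathGraph_le_two {n : ℕ} (j : Fin n) :
    #((pathGraph n).neighborFinset j) ≤ 2 := by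
  have hinj : Set.InjOn (fun u : Fin n => decide (u < j)) ((pathGraph n).neighborFinset j) := by
    intro u hu u' hu' h
    simp only [coe_neighborFinset, mem_neighborSet, pathGraph_adj, decide_eq_decide,
      Fin.lt_def] at hu hu' h
    omega
  simpa using card_le_card_of_injOn _ (fun _ _ => mem_univ _) hinj

theorem card_neighborFinset_grid_erase_lt {n : ℕ} (v : Fin 4 × Fin n)
    [Fintype ((pathGraph 4 □ pathGraph n).neighborSet v)] :
    #(((pathGraph 4 □ pathGraph n).neighborFinset v).erase (v.1.rev, v.2)) < 4 := by
  have hrow : ∀ a : Fin 4, #(((pathGraph 4).neighborFinset a).erase a.rev) ≤ 1 := by decide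
  have hsub : ((pathGraph 4 □ pathGraph n).neighborFinset v).erase (v.1.rev, v.2) ⊆
      (((pathGraph 4).neighborFinset v.1).erase v.1.rev) ×ˢ {v.2} ∪
        {v.1} ×ˢ (pathGraph n).neighborFinset v.2 := by
    intro x hx
    rw [neighborFinset_boxProd] at hx
    aesop
  calc _ ≤ _ := card_le_card hsub
    _ ≤ _ := card_union_le _ _
    _ ≤ 1 + 2 := by
      simp only [card_product, card_singleton, mul_one, one_mul]
      exact add_le_add (hrow v.1) (card_neighborFinset_pathGraph_le_two v.2)
    _ < 4 := by norm_num

theorem pathGraph_adj_rev_rev_iff {m : ℕ} (a b : Fin m) :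
    (pathGraph m).Adj a.rev b.rev ↔ (pathGraph m).Adj a b := by
  simp only [pathGraph_adj, Fin.val_rev]
  omega

theorem pathGraph_boxProd_adj_rev_rev_iff {m : ℕ} {β : Type*} {H : SimpleGraph β}
    (u v : Fin m × β) :
    (pathGraph m □ H).Adj (u.1.rev, u.2) (v.1.rev, v.2) ↔ (pathGraph m □ H).Adj u v := by
  simp only [boxProd_adj, pathGraph_adj_rev_rev_iff, Fin.rev_inj]

theorem aliceWins_grid (n : ℕ) : AliceWins (pathGraph 4 □ pathGraph n) 4 false fun _ => none := by
  have hrev : ∀ a : Fin 4, a.rev ≠ a := by decide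
  exact aliceWins_of_mirror (σ := fun v => (v.1.rev, v.2)) (τ := Fin.rev) (fun v => by simp)
    pathGraph_boxProd_adj_rev_rev_iff (fun v h => hrev v.1 (congrArg Prod.fst h)) Fin.rev_rev hrev
    (fun v => card_neighborFinset_grid_erase_lt v) _ fun _ => rfl

section WindowGame

variable {W : Type*} [DecidableEq W] {H : SimpleGraph W} {I : Set W} {k : ℕ}

/-- Bob, moving only on `I`, can force a dead vertex of `H` although Alice may also pass; a pass
stands for a move of Alice outside `H` when `H` is a window of a larger graph. -/
inductive BobForces (H : SimpleGraph W) (I : Set W) (k : ℕ) : Bool → (W → Option (Fin k)) → Prop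
  | dead {t : Bool} {c : W → Option (Fin k)} {u : W} : IsDead H c u → BobForces H I k t c
  | bobMove {c : W → Option (Fin k)} {v : W} {a : Fin k} : v ∈ I → validMove H c v a →
      BobForces H I k true (update c v (some a)) → BobForces H I k false c
  | aliceTurn {c : W → Option (Fin k)} : BobForces H I k false c →
      (∀ v a, validMove H c v a → BobForces H I k false (update c v (some a))) →
      BobForces H I k true c

theorem BobForces.exists_eq_none {t : Bool} {c : W → Option (Fin k)} (h : BobForces H I k t c) :
    ∃ w, c w = none := by
  induction h with
  | dead hu => exact ⟨_, hu.1⟩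
  | bobMove _ hm _ _ => exact ⟨_, hm.1⟩
  | aliceTurn _ _ ih _ => exact ih

theorem BobForces.bobWins {V : Type*} [Fintype V] [DecidableEq V] {G : SimpleGraph V}
    (e : H ↪g G) (hI : ∀ w ∈ I, ∀ u, G.Adj u (e w) → u ∈ Set.range e) {t : Bool}
    {cH : W → Option (Fin k)} (h : BobForces H I k t cH) {c : V → Option (Fin k)}
    (hc : c ∘ e = cH) : BobWins G k t c := by
  induction h generalizing c with
  | dead hu =>
    subst hc
    exact (IsDead.comap e.toHom hu).bobWins _
  | @bobMove _ v a hv hm _ ih =>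
    subst hc
    refine .bobMove c (e v) a ⟨hm.1, fun u hu => ?_⟩
      (ih (update_comp_eq_of_injective _ e.injective _ _))
    obtain ⟨w, rfl⟩ := hI v hv u hu
    exact hm.2 w (e.map_adj_iff.1 hu)
  | aliceTurn hpass _ ihpass ih =>
    subst hc
    refine .aliceTurn c (fun hall => ?_) fun v a hm => ?_
    · obtain ⟨w, hw⟩ := hpass.exists_eq_none
      exact hall (e w) hw
    by_cases hv : v ∈ Set.range e
    · obtain ⟨w, rfl⟩ := hv
      exact ih w a ⟨hm.1, fun w' hw' => hm.2 (e w') (e.map_adj_iff.2 hw')⟩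
        (update_comp_eq_of_injective _ e.injective _ _)
    · exact ihpass (update_comp_eq_of_forall_ne _ _ fun w hw => hv ⟨w, hw⟩)

end WindowGame

def windowEmbedding (r : ℕ) {m n : ℕ} (h : m ≤ n) :
    (pathGraph r □ pathGraph m) ↪g (pathGraph r □ pathGraph n) where
  toEmbedding := (Function.Embedding.refl _).prodMap (Fin.castLEEmb h)
  map_rel_iff' := by simp [boxProd_adj, pathGraph_adj, Fin.ext_iff]

theorem mem_range_windowEmbedding (r : ℕ) {m n : ℕ} (h : m ≤ n) {w : Fin r × Fin m}
    (hw : (w.2 : ℕ) + 1 < m) {u : Fin r × Fin n}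
    (hu : (pathGraph r □ pathGraph n).Adj u (windowEmbedding r h w)) :
    u ∈ Set.range (windowEmbedding r h) := by
  have hu2 : (u.2 : ℕ) < m := by
    simp [windowEmbedding, boxProd_adj, pathGraph_adj, Fin.ext_iff] at hu
    omega
  exact ⟨(u.1, ⟨u.2, hu2⟩), rfl⟩

section Certificate

def digit (s i : ℕ) : ℕ := s / 4 ^ i % 4

theorem digit_add_mul_pow {s i d : ℕ} (hs : digit s i = 0) (hd : d < 4) (j : ℕ) :
    digit (s + d * 4 ^ i) j = if j = i then d else digit s j := by
  unfold digit at *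
  rcases lt_trichotomy j i with hji | rfl | hij
  · obtain ⟨e, rfl⟩ := Nat.exists_eq_add_of_lt hji
    rw [if_neg hji.ne, show d * 4 ^ (j + e + 1) = d * 4 ^ e * 4 * 4 ^ j by ring,
      Nat.add_mul_div_right _ _ (by positivity), Nat.add_mul_mod_self_right]
  · rw [if_pos rfl, Nat.add_mul_div_right _ _ (by positivity), Nat.add_mod, hs, zero_add,
      Nat.mod_mod, Nat.mod_eq_of_lt hd]
  · obtain ⟨e, rfl⟩ := Nat.exists_eq_add_of_lt hij
    have hlow : s % 4 ^ (i + 1) < 4 ^ i := by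
      have := Nat.mod_mul_right_div_self s (4 ^ i) 4
      rw [hs, ← pow_succ, Nat.div_eq_zero_iff] at this
      exact this.resolve_left (by positivity)
    have hhigh : (s + d * 4 ^ i) / 4 ^ (i + 1) = s / 4 ^ (i + 1) := by
      conv_lhs => rw [← Nat.mod_add_div s (4 ^ (i + 1)), add_right_comm,
        Nat.add_mul_div_left _ _ (by positivity)]
      have : d * 4 ^ i ≤ 3 * 4 ^ i := Nat.mul_le_mul_right _ (by omega)
      rw [Nat.div_eq_of_lt (by rw [pow_succ] at hlow ⊢; omega), zero_add]
    rw [if_neg hij.ne', show i + e + 1 = i + 1 + e by omega, pow_add,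
      ← Nat.div_div_eq_div_mul, ← Nat.div_div_eq_div_mul, hhigh]

def colorCode {k : ℕ} : Option (Fin k) → ℕ
  | none => 0
  | some a => a + 1

theorem colorCode_eq_zero {k : ℕ} {o : Option (Fin k)} : colorCode o = 0 ↔ o = none := by
  cases o <;> simp [colorCode]

theorem colorCode_eq_succ {k : ℕ} {o : Option (Fin k)} {a : Fin k} :
    colorCode o = a + 1 ↔ o = some a := by
  cases o <;> simp [colorCode, Fin.ext_iff]

/-- A position `c` on the `4 × 9` window is stored as the number `s` whose base-`4` digit number
`finProdFinEquiv w = 9 * row + column` is `0` if `w` is uncolored and `a + 1` if it has color `a`;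
this keeps the kernel evaluation of `check` fast. -/
def Encodes {k : ℕ} (s : ℕ) (c : Fin 4 × Fin 9 → Option (Fin k)) : Prop :=
  ∀ w, digit s (finProdFinEquiv w) = colorCode (c w)

theorem encodes_zero (k : ℕ) : Encodes 0 fun _ : Fin 4 × Fin 9 => (none : Option (Fin k)) :=
  fun _ => by simp [digit, colorCode]

theorem Encodes.update {k s : ℕ} {c : Fin 4 × Fin 9 → Option (Fin k)} (hk : k ≤ 3)
    (hs : Encodes s c) {w : Fin 4 × Fin 9} (hw : c w = none) (a : Fin k) :
    Encodes (s + (a + 1) * 4 ^ (finProdFinEquiv w : ℕ)) (update c w (some a)) := by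
  intro w'
  rw [digit_add_mul_pow (by rw [hs, hw]; rfl) (by omega)]
  rcases eq_or_ne w' w with rfl | hw'
  · simp [colorCode]
  · rw [if_neg (fun h => hw' (finProdFinEquiv.injective (Fin.ext h))), update_of_ne hw', hs]

def windowNbrs (i : ℕ) : List ℕ :=
  (if i < 27 then [i + 9] else []) ++ (if 9 ≤ i then [i - 9] else []) ++
    (if i % 9 < 8 then [i + 1] else []) ++ (if 0 < i % 9 then [i - 1] else [])

theorem mem_windowNbrs_iff : ∀ w w' : Fin 4 × Fin 9,
    (finProdFinEquiv w' : ℕ) ∈ windowNbrs (finProdFinEquiv w) ↔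
      (pathGraph 4 □ pathGraph 9).Adj w' w := by
  decide

theorem exists_of_mem_windowNbrs {w : Fin 4 × Fin 9} {j : ℕ}
    (hj : j ∈ windowNbrs (finProdFinEquiv w)) :
    ∃ w', (finProdFinEquiv w' : ℕ) = j ∧ (pathGraph 4 □ pathGraph 9).Adj w' w := by
  have hlt : ∀ i < 36, ∀ j ∈ windowNbrs i, j < 36 := by decide
  have hj36 := hlt _ (finProdFinEquiv w).isLt j hj
  refine ⟨finProdFinEquiv.symm ⟨j, hj36⟩, by simp, ?_⟩
  rw [← mem_windowNbrs_iff]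
  simpa using hj

def nbrHas (s i d : ℕ) : Bool := (windowNbrs i).any (digit s · == d)

def canPlay (s i d : ℕ) : Bool := digit s i == 0 && !nbrHas s i d

def deadAt (k s i : ℕ) : Bool :=
  decide (i < 36) && digit s i == 0 && (List.range k).all fun a => nbrHas s i (a + 1)

def deadNear (k s i : ℕ) : Bool := (windowNbrs i).any (deadAt k s)

/-- `check k strat f aliceTurn s m last` holds if Bob, trying the moves `(cell, digit, memory)`
proposed by `strat f s m`, wins from `s` within `f` plies against every move or pass of Alice.
Only the neighbors of the last move `last` are tested for dead vertices (`36` stands for a pass). -/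
def check {M : Type} (k : ℕ) (strat : ℕ → ℕ → M → List (ℕ × ℕ × M)) :
    ℕ → Bool → ℕ → M → ℕ → Bool
  | 0, _, s, _, last => deadNear k s last
  | f + 1, false, s, m, last =>
    (strat f s m).any (fun t => decide (t.1 < 36) && decide (t.1 % 9 < 8) && decide (0 < t.2.1) &&
      decide (t.2.1 ≤ k) && canPlay s t.1 t.2.1 &&
        check k strat f true (s + t.2.1 * 4 ^ t.1) t.2.2 t.1) ||
      deadNear k s last
  | f + 1, true, s, m, _ =>
    check k strat f false s m 36 && (List.range 36).all fun i => (List.range k).all fun a =>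
      !canPlay s i (a + 1) || check k strat f false (s + (a + 1) * 4 ^ i) m i

variable {k s : ℕ} {c : Fin 4 × Fin 9 → Option (Fin k)}

theorem Encodes.nbrHas_iff (hs : Encodes s c) (w : Fin 4 × Fin 9) (a : Fin k) :
    nbrHas s (finProdFinEquiv w) (a + 1) = true ↔
      ∃ w', (pathGraph 4 □ pathGraph 9).Adj w' w ∧ c w' = some a := by
  simp only [nbrHas, List.any_eq_true, beq_iff_eq]
  constructor
  · rintro ⟨j, hj, hd⟩
    obtain ⟨w', rfl, hadj⟩ := exists_of_mem_windowNbrs hj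
    exact ⟨w', hadj, colorCode_eq_succ.1 (hs w' ▸ hd)⟩
  · rintro ⟨w', hadj, hw'⟩
    exact ⟨_, (mem_windowNbrs_iff w w').2 hadj, by rw [hs, hw']; rfl⟩

theorem Encodes.canPlay_iff (hs : Encodes s c) (w : Fin 4 × Fin 9) (a : Fin k) :
    canPlay s (finProdFinEquiv w) (a + 1) = true ↔
      validMove (pathGraph 4 □ pathGraph 9) c w a := by
  simp only [canPlay, Bool.and_eq_true, beq_iff_eq, Bool.not_eq_true', ← Bool.not_eq_true,
    hs.nbrHas_iff, hs w, colorCode_eq_zero, validMove]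
  simp

theorem Encodes.exists_isDead (hs : Encodes s c) {i : ℕ} (h : deadNear k s i = true) :
    ∃ w, IsDead (pathGraph 4 □ pathGraph 9) c w := by
  obtain ⟨j, -, hj⟩ := List.any_eq_true.1 h
  simp only [deadAt, Bool.and_eq_true, decide_eq_true_eq, beq_iff_eq, List.all_eq_true,
    List.mem_range] at hj
  obtain ⟨⟨hj36, hj0⟩, hcol⟩ := hj
  obtain ⟨w, rfl⟩ : ∃ w : Fin 4 × Fin 9, (finProdFinEquiv w : ℕ) = j :=
    ⟨finProdFinEquiv.symm ⟨j, hj36⟩, by simp⟩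
  exact ⟨w, colorCode_eq_zero.1 (hs w ▸ hj0), fun a => (hs.nbrHas_iff w a).1 (hcol a a.isLt)⟩

theorem bobForces_of_check {M : Type} (hk : k ≤ 3) (strat : ℕ → ℕ → M → List (ℕ × ℕ × M))
    (f : ℕ) {t : Bool} {m : M} {last : ℕ} (hs : Encodes s c)
    (h : check k strat f t s m last = true) :
    BobForces (pathGraph 4 □ pathGraph 9) {w | (w.2 : ℕ) < 8} k t c := by
  induction f generalizing t s m last c with
  | zero =>
    obtain ⟨w, hw⟩ := hs.exists_isDead h
    exact .dead hw
  | succ f ih =>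
    cases t with
    | false =>
      simp only [check, Bool.or_eq_true, List.any_eq_true, Bool.and_eq_true,
        decide_eq_true_eq] at h
      rcases h with ⟨⟨i, d, m'⟩, -, ⟨⟨⟨⟨hi, hi8⟩, hd⟩, hdk⟩, hplay⟩, hnext⟩ | hdead
      · dsimp only at hi hi8 hd hdk hplay hnext
        obtain ⟨w, rfl⟩ : ∃ w : Fin 4 × Fin 9, (finProdFinEquiv w : ℕ) = i :=
          ⟨finProdFinEquiv.symm ⟨i, hi⟩, by simp⟩
        obtain ⟨a, rfl⟩ : ∃ a : Fin k, d = a + 1 := ⟨⟨d - 1, by omega⟩, by simp; omega⟩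
        have hm := (hs.canPlay_iff w a).1 hplay
        refine .bobMove (show (w.2 : ℕ) < 8 from ?_) hm (ih (hs.update hk hm.1 a) hnext)
        have := w.2.isLt
        simp [finProdFinEquiv] at hi8
        omega
      · obtain ⟨w, hw⟩ := hs.exists_isDead hdead
        exact .dead hw
    | true =>
      simp only [check, Bool.and_eq_true, List.all_eq_true, List.mem_range, Bool.or_eq_true,
        Bool.not_eq_true'] at h
      refine .aliceTurn (ih hs h.1) fun w a hm => ?_
      rcases h.2 _ (finProdFinEquiv w).isLt a a.isLt with hno | hnext
      · rw [(hs.canPlay_iff w a).2 hm] at hno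
        contradiction
      · exact ih (hs.update hk hm.1 a) hnext

end Certificate

/-- After Bob opens with digit `1` on cell `22`: his second move `(cell, digit)` and the candidates
for his third one, indexed by Alice's first move (`none` if she played outside the window). -/
def threeColorReplies : List (Option (ℕ × ℕ) × ℕ × ℕ × List (ℕ × ℕ)) :=
  [(none, 12, 2, [(4, 3), (30, 3)]), (some (0, 1), 10, 2, [(18, 3), (2, 3)]),
   (some (0, 2), 10, 1, [(18, 3), (2, 3)]), (some (0, 3), 10, 1, [(2, 2), (18, 2)]),
   (some (1, 1), 11, 2, [(9, 3), (3, 3)]), (some (1, 2), 11, 1, [(9, 3), (3, 3)]),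
   (some (1, 3), 11, 1, [(9, 2), (3, 2)]), (some (2, 1), 10, 2, [(0, 3), (20, 3)]),
   (some (2, 2), 4, 3, [(12, 1), (14, 2)]), (some (2, 3), 4, 2, [(12, 1), (14, 3)]),
   (some (3, 1), 4, 2, [(12, 3), (14, 3), (21, 2)]),
   (some (3, 2), 5, 1, [(13, 3), (14, 2), (24, 2), (23, 3)]),
   (some (3, 3), 5, 1, [(13, 2), (14, 3), (23, 2), (32, 3)]),
   (some (4, 1), 12, 2, [(30, 3), (2, 3)]), (some (4, 2), 2, 3, [(12, 1), (14, 3)]),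
   (some (4, 3), 2, 2, [(12, 1), (14, 2)]),
   (some (5, 1), 3, 2, [(13, 3), (14, 2), (24, 2), (23, 3)]),
   (some (5, 2), 3, 1, [(13, 3), (12, 2), (21, 3), (30, 2)]),
   (some (5, 3), 3, 1, [(13, 2), (12, 3), (21, 2), (30, 3)]),
   (some (6, 1), 12, 2, [(4, 3), (30, 3)]), (some (6, 2), 4, 3, [(14, 1), (12, 2)]),
   (some (6, 3), 4, 2, [(14, 1), (12, 3)]), (some (7, 1), 12, 2, [(4, 3), (30, 3)]),
   (some (7, 2), 12, 2, [(4, 3), (30, 3)]), (some (7, 3), 12, 2, [(4, 3), (30, 3)]),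
   (some (8, 1), 12, 2, [(4, 3), (30, 3)]), (some (8, 2), 12, 2, [(4, 3), (30, 3)]),
   (some (8, 3), 12, 2, [(4, 3), (30, 3)]), (some (9, 1), 12, 2, [(4, 3), (30, 3)]),
   (some (9, 2), 12, 2, [(4, 3), (30, 3)]), (some (9, 3), 12, 2, [(4, 3), (30, 3)]),
   (some (10, 1), 0, 2, [(18, 3), (2, 3)]), (some (10, 2), 0, 1, [(18, 3), (2, 3)]),
   (some (10, 3), 0, 1, [(2, 2), (18, 2)]), (some (11, 1), 1, 2, [(9, 3), (3, 3)]),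
   (some (11, 2), 1, 1, [(9, 3), (3, 3)]), (some (11, 3), 1, 1, [(9, 2), (3, 2)]),
   (some (12, 1), 2, 2, [(4, 3), (20, 3)]), (some (12, 2), 1, 1, [(4, 3), (30, 3)]),
   (some (12, 3), 1, 1, [(4, 2), (30, 2)]), (some (13, 2), 3, 1, [(21, 3), (5, 3)]),
   (some (13, 3), 3, 1, [(21, 2), (5, 2)]), (some (14, 1), 4, 2, [(6, 3), (12, 3)]),
   (some (14, 2), 3, 1, [(4, 3), (32, 3)]), (some (14, 3), 3, 1, [(4, 2), (24, 2)]),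
   (some (15, 1), 4, 2, [(14, 3), (12, 3), (23, 2)]),
   (some (15, 2), 4, 2, [(14, 3), (12, 3), (5, 1)]),
   (some (15, 3), 4, 3, [(14, 2), (12, 2), (5, 1)]), (some (16, 1), 12, 2, [(4, 3), (30, 3)]),
   (some (16, 2), 12, 2, [(4, 3), (30, 3)]), (some (16, 3), 12, 2, [(4, 3), (30, 3)]),
   (some (17, 1), 12, 2, [(4, 3), (30, 3)]), (some (17, 2), 12, 2, [(4, 3), (30, 3)]),
   (some (17, 3), 12, 2, [(4, 3), (30, 3)]), (some (18, 1), 10, 2, [(0, 3), (28, 3)]),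
   (some (18, 2), 10, 1, [(0, 3), (28, 3)]), (some (18, 3), 10, 1, [(0, 2), (28, 2)]),
   (some (19, 1), 9, 2, [(27, 3), (1, 3)]), (some (19, 2), 9, 1, [(27, 3), (1, 3)]),
   (some (19, 3), 9, 1, [(27, 2), (1, 2)]), (some (20, 1), 10, 2, [(28, 3), (12, 3)]),
   (some (20, 2), 2, 1, [(30, 3), (10, 3)]), (some (20, 3), 2, 1, [(30, 2), (10, 2)]),
   (some (21, 2), 3, 1, [(13, 3), (11, 3), (14, 2)]),
   (some (21, 3), 3, 1, [(13, 2), (11, 2), (4, 3)]),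
   (some (23, 2), 4, 2, [(14, 3), (12, 3), (15, 1)]),
   (some (23, 3), 4, 3, [(14, 2), (12, 2), (15, 1)]), (some (24, 1), 12, 2, [(4, 3), (30, 3)]),
   (some (24, 2), 4, 2, [(32, 3), (12, 3)]), (some (24, 3), 4, 2, [(14, 2), (12, 3)]),
   (some (25, 1), 12, 2, [(4, 3), (30, 3)]), (some (25, 2), 12, 2, [(4, 3), (30, 3)]),
   (some (25, 3), 12, 2, [(4, 3), (30, 3)]), (some (26, 1), 12, 2, [(4, 3), (30, 3)]),
   (some (26, 2), 12, 2, [(4, 3), (30, 3)]), (some (26, 3), 12, 2, [(4, 3), (30, 3)]),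
   (some (27, 1), 12, 2, [(4, 3), (30, 3)]), (some (27, 2), 12, 2, [(4, 3), (30, 3)]),
   (some (27, 3), 12, 2, [(4, 3), (30, 3)]), (some (28, 1), 12, 2, [(4, 3), (30, 3)]),
   (some (28, 2), 12, 2, [(4, 3), (30, 3)]), (some (28, 3), 12, 2, [(30, 3), (4, 3)]),
   (some (29, 1), 11, 2, [(21, 3), (19, 3), (30, 2)]),
   (some (29, 2), 11, 1, [(21, 3), (19, 3), (12, 2)]),
   (some (29, 3), 11, 1, [(21, 2), (19, 2), (12, 3)]), (some (30, 1), 12, 2, [(4, 3), (20, 3)]),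
   (some (30, 2), 3, 1, [(12, 3), (32, 3)]), (some (30, 3), 3, 1, [(12, 2), (32, 2)]),
   (some (31, 2), 12, 2, [(30, 3), (4, 3)]), (some (31, 3), 12, 2, [(4, 3), (20, 3)]),
   (some (32, 1), 12, 2, [(4, 3), (30, 3)]), (some (32, 2), 3, 1, [(30, 3), (24, 3)]),
   (some (32, 3), 3, 1, [(30, 2), (24, 2)]), (some (33, 1), 12, 2, [(4, 3), (30, 3)]),
   (some (33, 2), 12, 2, [(4, 3), (30, 3)]), (some (33, 3), 12, 2, [(4, 3), (30, 3)]),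
   (some (34, 1), 12, 2, [(4, 3), (30, 3)]), (some (34, 2), 12, 2, [(4, 3), (30, 3)]),
   (some (34, 3), 12, 2, [(4, 3), (30, 3)]), (some (35, 1), 12, 2, [(4, 3), (30, 3)]),
   (some (35, 2), 12, 2, [(4, 3), (30, 3)]), (some (35, 3), 12, 2, [(4, 3), (30, 3)])]

def twoColorReplies : List (Option (ℕ × ℕ) × ℕ × ℕ) :=
  [(none, 4, 2), (some (0, 1), 2, 2), (some (0, 2), 2, 1), (some (1, 1), 3, 2), (some (1, 2), 3, 1),
   (some (2, 1), 0, 2), (some (2, 2), 0, 1), (some (3, 1), 1, 2), (some (3, 2), 1, 1),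
   (some (4, 1), 2, 2), (some (5, 1), 3, 2), (some (5, 2), 3, 1), (some (6, 1), 4, 2),
   (some (6, 2), 4, 1), (some (7, 1), 4, 2), (some (7, 2), 4, 2), (some (8, 1), 4, 2),
   (some (8, 2), 4, 2), (some (9, 1), 1, 2), (some (9, 2), 1, 1), (some (10, 1), 0, 2),
   (some (10, 2), 0, 1), (some (11, 1), 1, 2), (some (11, 2), 1, 1), (some (12, 1), 2, 2),
   (some (13, 2), 3, 1), (some (14, 1), 4, 2), (some (15, 1), 4, 2), (some (15, 2), 4, 2),
   (some (16, 1), 4, 2), (some (16, 2), 4, 2), (some (17, 1), 4, 2), (some (17, 2), 4, 2),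
   (some (18, 1), 0, 2), (some (18, 2), 0, 1), (some (19, 1), 1, 2), (some (19, 2), 1, 1),
   (some (20, 1), 2, 2), (some (21, 2), 3, 1), (some (23, 2), 4, 2), (some (24, 1), 4, 2),
   (some (25, 1), 4, 2), (some (25, 2), 4, 2), (some (26, 1), 4, 2), (some (26, 2), 4, 2),
   (some (27, 1), 4, 2), (some (27, 2), 4, 2), (some (28, 1), 4, 2), (some (28, 2), 4, 2),
   (some (29, 1), 4, 2), (some (29, 2), 4, 2), (some (30, 1), 4, 2), (some (31, 2), 4, 2),
   (some (32, 1), 4, 2), (some (33, 1), 4, 2), (some (33, 2), 4, 2), (some (34, 1), 4, 2),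
   (some (34, 2), 4, 2), (some (35, 1), 4, 2), (some (35, 2), 4, 2)]

def firstAliceMove (s : ℕ) : Option (ℕ × ℕ) :=
  (List.range 36).findSome? fun i => if i ≠ 22 ∧ digit s i ≠ 0 then some (i, digit s i) else none

def threeColorStrategy : ℕ → ℕ → List (ℕ × ℕ) → List (ℕ × ℕ × List (ℕ × ℕ))
  | 4, _, _ => [(22, 1, [])]
  | 2, s, _ =>
    ((threeColorReplies.lookup (firstAliceMove s)).map fun r => (r.1, r.2.1, r.2.2)).toList
  | 0, _, m => m.map fun t => (t.1, t.2, [])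
  | _, _, _ => []

def twoColorStrategy : ℕ → ℕ → Unit → List (ℕ × ℕ × Unit)
  | 2, _, _ => [(22, 1, ())]
  | 0, s, _ => ((twoColorReplies.lookup (firstAliceMove s)).map fun r => (r.1, r.2, ())).toList
  | _, _, _ => []

def oneColorStrategy : ℕ → ℕ → Unit → List (ℕ × ℕ × Unit)
  | 0, _, _ => [(22, 1, ())]
  | _, _, _ => []

theorem check_oneColorStrategy : check 1 oneColorStrategy 1 false 0 () 36 = true := by
  decide +kernel

theorem check_twoColorStrategy : check 2 twoColorStrategy 3 false 0 () 36 = true := by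
  decide +kernel

theorem check_threeColorStrategy : check 3 threeColorStrategy 5 false 0 [] 36 = true := by
  decide +kernel

theorem bobForces_window_empty {k : ℕ} (hk : k < 4) :
    BobForces (pathGraph 4 □ pathGraph 9) {w | (w.2 : ℕ) < 8} k false fun _ => none := by
  interval_cases k
  · exact .dead (u := (0, 0)) ⟨rfl, fun a => a.elim0⟩
  · exact bobForces_of_check (by norm_num) _ _ (encodes_zero 1) check_oneColorStrategy
  · exact bobForces_of_check (by norm_num) _ _ (encodes_zero 2) check_twoColorStrategy
  · exact bobForces_of_check (by norm_num) _ _ (encodes_zero 3) check_threeColorStrategy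

/-- For every `n ≥ 9`, the Bob-start game chromatic number of the `4 × n` grid
graph `P₄ □ Pₙ` is exactly `4`. -/
theorem bobStartGameChromaticNumber_grid_eq_four (n : ℕ) (hn : 9 ≤ n) :
    bobStartGameChromaticNumber (pathGraph 4 □ pathGraph n) = 4 :=
  bobStartGameChromaticNumber_eq_of_aliceWins_of_bobWins (aliceWins_grid n) fun _ hk =>
    (bobForces_window_empty hk).bobWins (windowEmbedding 4 hn)
      (fun _ hw _ hu => mem_range_windowEmbedding 4 hn (Nat.succ_lt_succ hw) hu) rfl
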